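/- Let R be a commutative ring. If A and B are Azumaya algebras over R, then A ⊗_R B is an Azumaya algebra over R. -/

import Mathlib

open TensorProduct MulOpposite

/-- The sandwich map `A ⊗[R] Aᵐᵒᵖ →ₗ[R] End_R(A)`, `a ⊗ a' ↦ (x ↦ a * x * a')`. -/
noncomputable def sandwichMap (R : Type*) [CommRing R] (A : Type*) [Ring A] [Algebra R A] :
    A ⊗[R] Aᵐᵒᵖ →ₗ[R] Module.End R A :=
  TensorProduct.lift <| LinearMap.mk₂ R
    (fun a b => LinearMap.mulRight R b.unop ∘ₗ LinearMap.mulLeft R a)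
    (fun a a' b => by ext x; simp [add_mul])
    (fun c a b => by ext x; simp [smul_mul_assoc])
    (fun a b b' => by ext x; simp [mul_add])
    (fun c a b => by ext x; simp [mul_smul_comm])

/-- `A` is an Azumaya algebra over `R`: it is a finitely generated projective
faithful `R`-module and the sandwich map `A ⊗[R] Aᵐᵒᵖ → End_R(A)` is bijective. -/
def IsAzumayaAlg (R : Type*) [CommRing R] (A : Type*) [Ring A] [Algebra R A] : Prop :=
  Module.Finite R A ∧ Module.Projective R A ∧ FaithfulSMul R A ∧
    Function.Bijective (sandwichMap R A)

section Aux

variable {R : Type*} [CommRing R]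

@[simp]
lemma sandwichMap_tmul {A : Type*} [Ring A] [Algebra R A] (a : A) (a' : Aᵐᵒᵖ) (x : A) :
    sandwichMap R A (a ⊗ₜ a') x = a * x * a'.unop := rfl

/-- Conjugation `f ↦ i ∘ f ∘ p` as a linear map between endomorphism modules. -/
noncomputable def conjL {M F : Type*} [AddCommGroup M] [AddCommGroup F]
    [Module R M] [Module R F] (i : M →ₗ[R] F) (p : F →ₗ[R] M) :
    Module.End R M →ₗ[R] Module.End R F :=
  (LinearMap.lcomp R F p).comp (LinearMap.llcomp R M M F i)

@[simp]
lemma conjL_apply {M F : Type*} [AddCommGroup M] [AddCommGroup F]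
    [Module R M] [Module R F] (i : M →ₗ[R] F) (p : F →ₗ[R] M) (f : Module.End R M) :
    conjL i p f = i ∘ₗ f ∘ₗ p := rfl

/-- A finite projective module is a retract of a finite free module. -/
lemma exists_retract (R M : Type*) [CommRing R] [AddCommGroup M] [Module R M]
    [Module.Finite R M] [Module.Projective R M] :
    ∃ (n : ℕ) (i : M →ₗ[R] (Fin n → R)) (p : (Fin n → R) →ₗ[R] M), p ∘ₗ i = LinearMap.id := by
  obtain ⟨n, p, hp⟩ := Module.Finite.exists_fin' R M
  obtain ⟨i, hi⟩ := Module.projective_lifting_property p LinearMap.id hp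
  exact ⟨n, i, p, hi⟩

/-- For finite projective modules `M`, `N`, the natural map
`End M ⊗ End N → End (M ⊗ N)` is bijective. -/
lemma homTensorHomMap_bijective (M N : Type*) [AddCommGroup M] [AddCommGroup N]
    [Module R M] [Module R N] [Module.Finite R M] [Module.Projective R M]
    [Module.Finite R N] [Module.Projective R N] :
    Function.Bijective (TensorProduct.homTensorHomMap (RingHom.id R) M N M N) := by
  obtain ⟨m, iM, pM, hM⟩ := exists_retract R M
  obtain ⟨n, iN, pN, hN⟩ := exists_retract R N
  set F := Fin m → R
  set G := Fin n → R
  set g : (F →ₗ[R] F) ⊗[R] (G →ₗ[R] G) ≃ₗ[R] (F ⊗[R] G →ₗ[R] F ⊗[R] G) :=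
    homTensorHomEquiv R F G F G with hg
  set S : Module.End R M ⊗[R] Module.End R N →ₗ[R] Module.End R F ⊗[R] Module.End R G :=
    TensorProduct.map (conjL iM pM) (conjL iN pN) with hS
  set S' : Module.End R F ⊗[R] Module.End R G →ₗ[R] Module.End R M ⊗[R] Module.End R N :=
    TensorProduct.map (conjL pM iM) (conjL pN iN) with hS'
  set s : Module.End R (M ⊗[R] N) →ₗ[R] Module.End R (F ⊗[R] G) :=
    conjL (TensorProduct.map iM iN) (TensorProduct.map pM pN) with hs
  set r : Module.End R (F ⊗[R] G) →ₗ[R] Module.End R (M ⊗[R] N) :=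
    conjL (TensorProduct.map pM pN) (TensorProduct.map iM iN) with hr
  have hmapMN : TensorProduct.map pM pN ∘ₗ TensorProduct.map iM iN = LinearMap.id := by
    rw [← TensorProduct.map_comp, hM, hN, TensorProduct.map_id]
  have sq1 : (TensorProduct.homTensorHomMap (RingHom.id R) F G F G) ∘ₗ S
      = s ∘ₗ (TensorProduct.homTensorHomMap (RingHom.id R) M N M N) := by
    apply TensorProduct.ext'
    intro f g'
    simp only [LinearMap.comp_apply, hS, TensorProduct.map_tmul,
      TensorProduct.homTensorHomMap_apply, conjL_apply, hs]
    rw [TensorProduct.map_comp, TensorProduct.map_comp]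
  have sq2 : (TensorProduct.homTensorHomMap (RingHom.id R) M N M N) ∘ₗ S'
      = r ∘ₗ (TensorProduct.homTensorHomMap (RingHom.id R) F G F G) := by
    apply TensorProduct.ext'
    intro f g'
    simp only [LinearMap.comp_apply, hS', TensorProduct.map_tmul,
      TensorProduct.homTensorHomMap_apply, conjL_apply, hr]
    rw [TensorProduct.map_comp, TensorProduct.map_comp]
  have hM' : ∀ x, pM (iM x) = x := fun x => DFunLike.congr_fun hM x
  have hN' : ∀ x, pN (iN x) = x := fun x => DFunLike.congr_fun hN x
  have hmapMN' : ∀ z, TensorProduct.map pM pN (TensorProduct.map iM iN z) = z :=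
    fun z => DFunLike.congr_fun hmapMN z
  have hS'S : S' ∘ₗ S = LinearMap.id := by
    apply TensorProduct.ext'
    intro f g'
    simp only [LinearMap.comp_apply, hS, hS', TensorProduct.map_tmul, conjL_apply,
      LinearMap.id_coe, id_eq]
    congr 1 <;> ext x <;> simp [LinearMap.comp_apply, hM', hN']
  have hrs : ∀ h : Module.End R (M ⊗[R] N), r (s h) = h := by
    intro h
    simp only [hr, hs, conjL_apply]
    ext z
    simp [LinearMap.comp_apply, hmapMN', hM', hN']
  refine Function.bijective_iff_has_inverse.mpr
    ⟨S' ∘ g.symm ∘ s, fun x => ?_, fun y => ?_⟩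
  · -- left inverse : S' (g.symm (s (hTHM x))) = x
    have h1 : s (TensorProduct.homTensorHomMap (RingHom.id R) M N M N x)
        = TensorProduct.homTensorHomMap (RingHom.id R) F G F G (S x) :=
      (LinearMap.ext_iff.mp sq1 x).symm
    have h2 : TensorProduct.homTensorHomMap (RingHom.id R) F G F G (S x) = g (S x) := by
      rw [hg, homTensorHomEquiv_apply]
    simp only [Function.comp_apply, h1, h2, LinearEquiv.symm_apply_apply]
    exact LinearMap.ext_iff.mp hS'S x
  · -- right inverse
    have h2 : ∀ w, TensorProduct.homTensorHomMap (RingHom.id R) F G F G w = g w := fun w => by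
      rw [hg, homTensorHomEquiv_apply]
    have h1 : TensorProduct.homTensorHomMap (RingHom.id R) M N M N (S' (g.symm (s y)))
        = r (TensorProduct.homTensorHomMap (RingHom.id R) F G F G (g.symm (s y))) :=
      LinearMap.ext_iff.mp sq2 _
    rw [Function.comp_apply, Function.comp_apply, h1, h2, LinearEquiv.apply_symm_apply]
    exact hrs y

/-- A finite projective faithful module is faithfully flat. -/
lemma faithfullyFlat_of_finite_projective_faithful (M : Type*) [AddCommGroup M] [Module R M]
    [Module.Finite R M] [Module.Projective R M] [FaithfulSMul R M] :
    Module.FaithfullyFlat R M := by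
  refine ⟨fun m hm h => ?_⟩
  obtain ⟨c, hc1, hc2⟩ := Submodule.exists_sub_one_mem_and_smul_eq_zero_of_fg_of_le_smul m
    (⊤ : Submodule R M) (Module.Finite.fg_top) (le_of_eq h.symm)
  have hc0 : c = 0 := by
    refine FaithfulSMul.eq_of_smul_eq_smul (α := M) fun x => ?_
    rw [hc2 x trivial, zero_smul]
  have : (1 : R) ∈ m := by
    have : -(1 : R) ∈ m := by simpa [hc0] using hc1
    simpa using m.neg_mem this
  exact hm.ne_top (Ideal.eq_top_iff_one m |>.mpr this)

end Aux

/-- The tensor product of two Azumaya algebras over `R` is Azumaya. -/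
theorem stmt_10 (R : Type*) [CommRing R]
    (A B : Type*) [Ring A] [Algebra R A] [Ring B] [Algebra R B]
    (hA : IsAzumayaAlg R A) (hB : IsAzumayaAlg R B) :
    IsAzumayaAlg R (A ⊗[R] B) := by
  obtain ⟨hAfin, hAproj, hAfaith, hAbij⟩ := hA
  obtain ⟨hBfin, hBproj, hBfaith, hBbij⟩ := hB
  haveI := hAfin; haveI := hAproj; haveI := hAfaith
  haveI := hBfin; haveI := hBproj; haveI := hBfaith
  haveI : Module.FaithfullyFlat R B := faithfullyFlat_of_finite_projective_faithful B
  refine ⟨inferInstance, inferInstance, ?_, ?_⟩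
  · -- FaithfulSMul
    refine ⟨fun {r s} h => ?_⟩
    have key : ((r - s) • (LinearMap.id : A →ₗ[R] A)) = 0 := by
      rw [Module.FaithfullyFlat.zero_iff_rTensor_zero R B]
      apply TensorProduct.ext'
      intro a b
      have := h (a ⊗ₜ b)
      simp only [LinearMap.rTensor_tmul, LinearMap.smul_apply, LinearMap.id_coe, id_eq,
        LinearMap.zero_apply]
      rw [sub_smul, sub_tmul, ← TensorProduct.smul_tmul', ← TensorProduct.smul_tmul',
        this, sub_self]
    refine FaithfulSMul.eq_of_smul_eq_smul (α := A) fun x => ?_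
    have := LinearMap.ext_iff.mp key x
    simp only [LinearMap.smul_apply, LinearMap.id_coe, id_eq, LinearMap.zero_apply,
      sub_smul] at this
    exact sub_eq_zero.mp this
  · -- bijectivity of the sandwich map
    set e : (A ⊗[R] B) ⊗[R] (A ⊗[R] B)ᵐᵒᵖ ≃ₗ[R] (A ⊗[R] Aᵐᵒᵖ) ⊗[R] (B ⊗[R] Bᵐᵒᵖ) :=
      (TensorProduct.congr (LinearEquiv.refl R (A ⊗[R] B))
        (Algebra.TensorProduct.opAlgEquiv R R A B).symm.toLinearEquiv) ≪≫ₗ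
        TensorProduct.tensorTensorTensorComm R A B Aᵐᵒᵖ Bᵐᵒᵖ with he
    have key : sandwichMap R (A ⊗[R] B)
        = (TensorProduct.homTensorHomMap (RingHom.id R) A B A B) ∘ₗ
          (TensorProduct.map (sandwichMap R A) (sandwichMap R B)) ∘ₗ e.toLinearMap := by
      have hsurj : Function.Surjective
          ((TensorProduct.congr (LinearEquiv.refl R (A ⊗[R] B))
            (opLinearEquiv R (M := A ⊗[R] B))).toLinearMap) :=
        (TensorProduct.congr _ _).surjective
      rw [← LinearMap.cancel_right hsurj]
      ext a b a' b'
      simp [he, TensorProduct.congr_tmul, Algebra.TensorProduct.opAlgEquiv_symm_tmul,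
        TensorProduct.tensorTensorTensorComm_tmul, TensorProduct.homTensorHomMap_apply,
        TensorProduct.map_tmul, Algebra.TensorProduct.tmul_mul_tmul, sandwichMap_tmul,
        LinearMap.comp_apply]
    rw [key]
    have hmap : Function.Bijective (TensorProduct.map (sandwichMap R A) (sandwichMap R B)) := by
      have : (TensorProduct.congr (LinearEquiv.ofBijective _ hAbij)
          (LinearEquiv.ofBijective _ hBbij)).toLinearMap
          = TensorProduct.map (sandwichMap R A) (sandwichMap R B) := by
        apply TensorProduct.ext'; intro x y; rfl
      rw [← this]
      exact (TensorProduct.congr _ _).bijective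
    exact ((homTensorHomMap_bijective A B).comp hmap).comp e.bijective
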